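/- Let n ≥ 5, let p ≠ q be coordinates in Fin n, and let τ₁, τ₂ be transpositions in S_n. Let b̃ be the element (f, 1) of W = S_n ≀ S_n with f p = τ₁, f q = τ₂ and f i = 1 for all other i. Then the normal closure of b̃ in W equals the subgroup e ≀ Ã_n = {(f, 1) : ∏ i, sign (f i) = 1}. -/

import Mathlib

/-- The automorphism of `Fin n → G` permuting coordinates by `σ`:
`(σ • f) i = f (σ⁻¹ i)`. -/
def permAut {n : ℕ} {G : Type*} [Group G] (σ : Equiv.Perm (Fin n)) :
    MulAut (Fin n → G) where
  toFun f i := f (σ⁻¹ i)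
  invFun f i := f (σ i)
  left_inv f := funext fun i => by simp
  right_inv f := funext fun i => by simp
  map_mul' f g := rfl

/-- The action of `Equiv.Perm (Fin n)` on `Fin n → G` by permuting coordinates,
as a homomorphism into the automorphism group. -/
def permHom (n : ℕ) (G : Type*) [Group G] :
    Equiv.Perm (Fin n) →* MulAut (Fin n → G) where
  toFun := permAut
  map_one' := rfl
  map_mul' _ _ := rfl

/-- The permutational wreath product `S_n ≀ S_m`, realized as the semidirect
product `(Fin n → Equiv.Perm (Fin m)) ⋊ Equiv.Perm (Fin n)`. -/
abbrev W (n m : ℕ) : Type :=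
  SemidirectProduct (Fin n → Equiv.Perm (Fin m)) (Equiv.Perm (Fin n))
    (permHom n (Equiv.Perm (Fin m)))

/-!
The map `w ↦ (∏ i, sign (w.left i), w.right)` is a homomorphism killing `b̃`, so the normal closure
lies in its kernel. Conversely, the base group is generated by the involutions `Pi.mulSingle i s`
(`s` a transposition), each of total sign `-1`, so its elements of total sign `1` are products of
pairs `Pi.mulSingle i s * Pi.mulSingle j t`. For `i ≠ j` such a pair is conjugate to
`b̃ = Pi.mulSingle p τ₁ * Pi.mulSingle q τ₂`: conjugate coordinatewise in the base group to turn
`τ₁, τ₂` into `s, t`, then by a permutation sending `p, q` to `i, j`. For `i = j`, insert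
`Pi.mulSingle k t` twice for some `k ≠ i`.
-/

open Equiv Equiv.Perm SemidirectProduct

lemma Equiv.Perm.IsSwap.inv {α : Type*} [DecidableEq α] {s : Perm α} (hs : s.IsSwap) :
    s⁻¹.IsSwap := by
  obtain ⟨a, b, hab, rfl⟩ := hs
  exact ⟨a, b, hab, swap_inv a b⟩

lemma Equiv.Perm.IsSwap.mul_self {α : Type*} [DecidableEq α] {s : Perm α} (hs : s.IsSwap) :
    s * s = 1 := by
  obtain ⟨a, b, -, rfl⟩ := hs
  exact swap_mul_self a b

lemma Equiv.Perm.IsSwap.isConj {α : Type*} [DecidableEq α] {s t : Perm α} (hs : s.IsSwap)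
    (ht : t.IsSwap) : IsConj s t := by
  obtain ⟨a, b, hab, rfl⟩ := hs
  obtain ⟨x, y, hxy, rfl⟩ := ht
  exact isConj_swap hab hxy

lemma Equiv.Perm.exists_apply_eq_and_apply_eq {α : Type*} [DecidableEq α] {p q i j : α}
    (hpq : p ≠ q) (hij : i ≠ j) : ∃ σ : Perm α, σ p = i ∧ σ q = j := by
  refine ⟨swap (swap p i q) j * swap p i, ?_, by simp⟩
  have hq : swap p i q ≠ i := fun h => hpq ((swap p i).injective (by simp [h])).symm
  simpa using swap_apply_of_ne_of_ne hq.symm hij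

section Pi

variable {ι α : Type*} [DecidableEq α]

lemma Pi.mul_mulSingle_mul_inv [DecidableEq ι] {G : Type*} [Group G] (h : ι → G) (i : ι)
    (g : G) :
    h * Pi.mulSingle i g * h⁻¹ = Pi.mulSingle i (h i * g * (h i)⁻¹) := by
  funext k
  by_cases hk : k = i
  · subst hk; simp
  · simp [hk]

lemma closure_mulSingle_isSwap [DecidableEq ι] [Finite ι] [Finite α] :
    Subgroup.closure {f : ι → Perm α | ∃ i s, s.IsSwap ∧ Pi.mulSingle i s = f} = ⊤ := by
  refine eq_top_iff.2 fun f _ => Subgroup.pi_mem_of_mulSingle_mem f fun i => ?_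
  suffices h : ∀ g ∈ Subgroup.closure {s : Perm α | s.IsSwap}, Pi.mulSingle i g ∈
      Subgroup.closure {f : ι → Perm α | ∃ i s, s.IsSwap ∧ Pi.mulSingle i s = f} from
    h (f i) (by simp [closure_isSwap])
  intro g hg
  induction hg using Subgroup.closure_induction with
  | mem s hs => exact Subgroup.subset_closure ⟨i, s, hs, rfl⟩
  | one => simp
  | mul s t _ _ hs ht => simpa [Pi.mulSingle_mul] using mul_mem hs ht
  | inv s _ hs => simpa [Pi.mulSingle_inv] using inv_mem hs

variable (ι α) [Fintype ι] [Fintype α]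

def piSign : (ι → Perm α) →* ℤˣ := ∏ i, sign.comp (Pi.evalMonoidHom (fun _ => Perm α) i)

variable {ι α}

lemma piSign_apply (f : ι → Perm α) : piSign ι α f = ∏ i, sign (f i) := by
  simp [piSign]

lemma piSign_mulSingle [DecidableEq ι] (i : ι) (s : Perm α) :
    piSign ι α (Pi.mulSingle i s) = sign s := by
  rw [piSign_apply, Fintype.prod_eq_single i fun j hj => by simp [hj]]
  simp

end Pi

theorem MonoidHom.ker_le_of_mul_mem {B : Type*} [Group B] {S : Set B}
    (hS : Subgroup.closure S = ⊤) (hSinv : ∀ s ∈ S, s⁻¹ ∈ S) {χ : B →* ℤˣ}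
    (hχ : ∀ s ∈ S, χ s = -1) {N : Subgroup B} (hN : ∀ s ∈ S, ∀ t ∈ S, s * t ∈ N) :
    χ.ker ≤ N := by
  let P : B → Prop := fun b => (χ b = 1 → b ∈ N) ∧ (χ b = -1 → ∀ s ∈ S, s * b ∈ N)
  have step : ∀ x ∈ S, ∀ y, P y → P (x * y) := by
    intro x hx y ⟨hy1, hy2⟩
    dsimp only [P]
    rw [map_mul, hχ x hx]
    refine ⟨fun h => hy2 ?_ x hx, fun h s hs => ?_⟩
    · simpa [neg_eq_iff_eq_neg] using h
    · rw [← mul_assoc]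
      exact mul_mem (hN s hs x hx) (hy1 (by simpa using h))
  have hP : ∀ b, P b := fun b => by
    induction (hS ▸ Subgroup.mem_top b : b ∈ Subgroup.closure S)
      using Subgroup.closure_induction_left with
    | one => exact ⟨fun _ => one_mem N, fun h => by simp at h⟩
    | mul_left x hx y _ hy => exact step x hx y hy
    | inv_mul_cancel x hx y _ hy => exact step _ (hSinv x hx) y hy
  exact fun b hb => (hP b).1 hb

section Wreath

variable {n m : ℕ}

@[simp] lemma permHom_apply {G : Type*} [Group G] (σ : Perm (Fin n)) (f : Fin n → G)
    (i : Fin n) :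
    permHom n G σ f i = f (σ⁻¹ i) := rfl

lemma permHom_mulSingle {G : Type*} [Group G] (σ : Perm (Fin n)) (i : Fin n) (g : G) :
    permHom n G σ (Pi.mulSingle i g) = Pi.mulSingle (σ i) g := by
  funext k
  simp [Pi.mulSingle_apply, symm_apply_eq, @eq_comm _ k]

lemma piSign_permHom (σ : Perm (Fin n)) (f : Fin n → Perm (Fin m)) :
    piSign (Fin n) (Fin m) (permHom n _ σ f) = piSign (Fin n) (Fin m) f := by
  simp only [piSign_apply, permHom_apply]
  exact Fintype.prod_equiv σ⁻¹ _ _ fun _ => rfl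

def piSignProdRight (n m : ℕ) : W n m →* ℤˣ × Perm (Fin n) :=
  lift ((piSign (Fin n) (Fin m)).prod 1) (MonoidHom.prod 1 (MonoidHom.id _)) fun σ => by
    ext f <;> simp [piSign_permHom]

lemma piSignProdRight_apply (w : W n m) :
    piSignProdRight n m w = (piSign (Fin n) (Fin m) w.left, w.right) := by
  conv_lhs => rw [← inl_left_mul_inr_right w]
  rw [piSignProdRight, map_mul, lift_inl, lift_inr]
  simp

variable {N : Subgroup (W n m)} [N.Normal]

lemma inl_mul_mul_inv_mem {f : Fin n → Perm (Fin m)} (hf : inl f ∈ N)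
    (h : Fin n → Perm (Fin m)) :
    inl (h * f * h⁻¹) ∈ N := by
  simpa using Subgroup.Normal.conj_mem ‹_› _ hf (inl h)

lemma inl_permHom_mem {f : Fin n → Perm (Fin m)} (hf : inl f ∈ N) (σ : Perm (Fin n)) :
    inl (permHom n _ σ f) ∈ N := by
  rw [inl_aut]
  exact Subgroup.Normal.conj_mem ‹_› _ hf (inr σ)

variable {p q : Fin n} {τ₁ τ₂ : Perm (Fin m)}

lemma inl_mulSingle_mul_mulSingle_mem_of_ne (hpq : p ≠ q) (h₁ : τ₁.IsSwap) (h₂ : τ₂.IsSwap)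
    (hN : inl (Pi.mulSingle p τ₁ * Pi.mulSingle q τ₂) ∈ N) {i j : Fin n} (hij : i ≠ j)
    {s t : Perm (Fin m)} (hs : s.IsSwap) (ht : t.IsSwap) :
    inl (Pi.mulSingle i s * Pi.mulSingle j t) ∈ N := by
  obtain ⟨c, rfl⟩ := isConj_iff.1 (h₁.isConj hs)
  obtain ⟨d, rfl⟩ := isConj_iff.1 (h₂.isConj ht)
  obtain ⟨σ, rfl, rfl⟩ := exists_apply_eq_and_apply_eq hpq hij
  set h : Fin n → Perm (Fin m) := fun k => if k = p then c else d
  have hconj : inl (h * Pi.mulSingle p τ₁ * h⁻¹ * (h * Pi.mulSingle q τ₂ * h⁻¹)) ∈ N := by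
    simpa [mul_assoc] using inl_mul_mul_inv_mem hN h
  rw [Pi.mul_mulSingle_mul_inv, Pi.mul_mulSingle_mul_inv] at hconj
  simpa [h, hpq.symm, permHom_mulSingle] using inl_permHom_mem hconj σ

lemma inl_mulSingle_mul_mulSingle_mem (hpq : p ≠ q) (h₁ : τ₁.IsSwap) (h₂ : τ₂.IsSwap)
    (hN : inl (Pi.mulSingle p τ₁ * Pi.mulSingle q τ₂) ∈ N) (i j : Fin n)
    {s t : Perm (Fin m)} (hs : s.IsSwap) (ht : t.IsSwap) :
    inl (Pi.mulSingle i s * Pi.mulSingle j t) ∈ N := by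
  rcases ne_or_eq i j with hij | rfl
  · exact inl_mulSingle_mul_mulSingle_mem_of_ne hpq h₁ h₂ hN hij hs ht
  obtain ⟨k, hk⟩ : ∃ k, k ≠ i := (eq_or_ne i p).elim (fun h => ⟨q, h ▸ hpq.symm⟩) (⟨p, ·.symm⟩)
  set y : Fin n → Perm (Fin m) := Pi.mulSingle k t with hy
  have hsplit : (Pi.mulSingle i s * Pi.mulSingle i t : Fin n → Perm (Fin m)) =
      Pi.mulSingle i s * y * (y * Pi.mulSingle i t) := by
    rw [mul_assoc, ← mul_assoc y, hy, ← Pi.mulSingle_mul k, ht.mul_self, Pi.mulSingle_one, one_mul]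
  rw [hsplit, inl.map_mul]
  exact mul_mem (inl_mulSingle_mul_mulSingle_mem_of_ne hpq h₁ h₂ hN hk.symm hs ht)
    (inl_mulSingle_mul_mulSingle_mem_of_ne hpq h₁ h₂ hN hk ht ht)

end Wreath

theorem normalClosure_inl_mulSingle_mul_mulSingle {n m : ℕ} {p q : Fin n} (hpq : p ≠ q)
    {τ₁ τ₂ : Perm (Fin m)} (h₁ : τ₁.IsSwap) (h₂ : τ₂.IsSwap) :
    Subgroup.normalClosure {inl (Pi.mulSingle p τ₁ * Pi.mulSingle q τ₂)} =
      (piSignProdRight n m).ker := by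
  set N := Subgroup.normalClosure {(inl (Pi.mulSingle p τ₁ * Pi.mulSingle q τ₂) : W n m)}
  refine le_antisymm (Subgroup.normalClosure_le_normal ?_) fun w hw => ?_
  · simp [piSignProdRight_apply, piSign_mulSingle, h₁.sign_eq, h₂.sign_eq]
  obtain ⟨hsign, hright⟩ := Prod.mk_eq_one.1 ((piSignProdRight_apply w).symm.trans hw)
  have hbase : (piSign (Fin n) (Fin m)).ker ≤ N.comap inl := by
    refine MonoidHom.ker_le_of_mul_mem closure_mulSingle_isSwap ?_ ?_ ?_
    · rintro _ ⟨i, s, hs, rfl⟩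
      exact ⟨i, s⁻¹, hs.inv, Pi.mulSingle_inv (f := fun _ => Perm (Fin m)) i s⟩
    · rintro _ ⟨i, s, hs, rfl⟩
      rw [piSign_mulSingle, hs.sign_eq]
    · rintro _ ⟨i, s, hs, rfl⟩ _ ⟨j, t, ht, rfl⟩
      exact inl_mulSingle_mul_mulSingle_mem hpq h₁ h₂
        (Subgroup.subset_normalClosure (Set.mem_singleton _)) i j hs ht
  rw [← inl_left_mul_inr_right w, hright, inr.map_one, mul_one]
  exact hbase hsign

theorem stmt2_general (n : ℕ) (p q : Fin n) (hpq : p ≠ q)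
    (τ₁ τ₂ : Equiv.Perm (Fin n)) (h1 : τ₁.IsSwap) (h2 : τ₂.IsSwap) :
    (Subgroup.normalClosure
        {(⟨fun i => if i = p then τ₁ else if i = q then τ₂ else 1, 1⟩ : W n n)} :
      Set (W n n)) =
    {w : W n n | w.right = 1 ∧ ∏ i, Equiv.Perm.sign (w.left i) = 1} := by
  have hb : (⟨fun i => if i = p then τ₁ else if i = q then τ₂ else 1, 1⟩ : W n n) =
      inl (Pi.mulSingle p τ₁ * Pi.mulSingle q τ₂) := by
    refine SemidirectProduct.ext (funext fun i => ?_) rfl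
    by_cases hip : i = p
    · simp [hip, hpq.symm]
    · simp [hip, Pi.mulSingle_apply]
  rw [hb, normalClosure_inl_mulSingle_mul_mulSingle hpq h1 h2]
  ext w
  simp [piSignProdRight_apply, piSign_apply, and_comm]

/-- The normal closure in `W = S_n ≀ S_n` of the element `b̃ = (f, 1)` with
`f p = τ₁`, `f q = τ₂` two transpositions and `f i = 1` elsewhere
equals `e ≀ Ã_n`. -/
theorem stmt2 (n : ℕ) (hn : 5 ≤ n) (p q : Fin n) (hpq : p ≠ q)
    (τ₁ τ₂ : Equiv.Perm (Fin n)) (h1 : τ₁.IsSwap) (h2 : τ₂.IsSwap) :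
    (Subgroup.normalClosure
        {(⟨fun i => if i = p then τ₁ else if i = q then τ₂ else 1, 1⟩ : W n n)} :
      Set (W n n)) =
    {w : W n n | w.right = 1 ∧ ∏ i, Equiv.Perm.sign (w.left i) = 1} :=
  stmt2_general n p q hpq τ₁ τ₂ h1 h2
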